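/- arXiv:1504.07658 — 2 statements merged into one kernel-verified Lean document; each statement's English description precedes it below -/
import Mathlib

section
/- Assume c ≠ 0 and τ ≥ 0. Then λ = 0 is a root of the characteristic function P of multiplicity at least two (i.e., P(0) = 0 and P′(0) = 0) if and only if c²b₁b₂ = D and τ = (c²(b₁+b₂) − C)/(2c²b₁b₂). -/
noncomputable section

/-- Coefficient A = b₁+b₂−2a -/
def cA (a b₁ b₂ : ℝ) : ℝ := b₁ + b₂ - 2*a
/-- Coefficient B = b₁b₂−2a(b₁+b₂)+a²+2 -/
def cB (a b₁ b₂ : ℝ) : ℝ := b₁*b₂ - 2*a*(b₁+b₂) + a^2 + 2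
/-- Coefficient C = (a²+1)(b₁+b₂)−2ab₁b₂−2a -/
def cC (a b₁ b₂ : ℝ) : ℝ := (a^2+1)*(b₁+b₂) - 2*a*b₁*b₂ - 2*a
/-- Coefficient D = a²b₁b₂−a(b₁+b₂)+1 -/
def cD (a b₁ b₂ : ℝ) : ℝ := a^2*b₁*b₂ - a*(b₁+b₂) + 1
/-- Coefficient E = c² -/
def cE (c : ℝ) : ℝ := c^2
/-- P̂ = A²−2B -/
def qP (a b₁ b₂ c : ℝ) : ℝ := (cA a b₁ b₂)^2 - 2*(cB a b₁ b₂)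
/-- Q̂ = B²+2D−2AC−E² -/
def qQ (a b₁ b₂ c : ℝ) : ℝ :=
  (cB a b₁ b₂)^2 + 2*(cD a b₁ b₂) - 2*(cA a b₁ b₂)*(cC a b₁ b₂) - (cE c)^2
/-- R̂ = C²−2BD−E²(b₁²+b₂²) -/
def qR (a b₁ b₂ c : ℝ) : ℝ :=
  (cC a b₁ b₂)^2 - 2*(cB a b₁ b₂)*(cD a b₁ b₂) - (cE c)^2*(b₁^2+b₂^2)
/-- Ŝ = D²−E²(b₁b₂)² -/
def qS (a b₁ b₂ c : ℝ) : ℝ := (cD a b₁ b₂)^2 - (cE c)^2*(b₁*b₂)^2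
/-- Auxiliary quartic h(z) = z⁴+P̂z³+Q̂z²+R̂z+Ŝ -/
def hq (a b₁ b₂ c z : ℝ) : ℝ :=
  z^4 + qP a b₁ b₂ c * z^3 + qQ a b₁ b₂ c * z^2 + qR a b₁ b₂ c * z + qS a b₁ b₂ c
/-- Derivative h′(z) = 4z³+3P̂z²+2Q̂z+R̂ -/
def hq' (a b₁ b₂ c z : ℝ) : ℝ :=
  4*z^3 + 3*qP a b₁ b₂ c * z^2 + 2*qQ a b₁ b₂ c * z + qR a b₁ b₂ c
/-- Characteristic function P(λ) = λ⁴+Aλ³+Bλ²+Cλ+D − E(λ+b₁)(λ+b₂)e^{−2λτ} -/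
def charP (a b₁ b₂ c τ : ℝ) (z : ℂ) : ℂ :=
  z^4 + (cA a b₁ b₂ : ℂ)*z^3 + (cB a b₁ b₂ : ℂ)*z^2 + (cC a b₁ b₂ : ℂ)*z + (cD a b₁ b₂ : ℂ)
    - (cE c : ℂ) * (z + (b₁:ℂ)) * (z + (b₂:ℂ)) * Complex.exp (-(2*z*(τ:ℂ)))

section

variable (a b₁ b₂ c τ : ℝ)

theorem charP_zero : charP a b₁ b₂ c τ 0 = ((cD a b₁ b₂ - cE c * b₁ * b₂ : ℝ) : ℂ) := by
  simp [charP]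

theorem hasDerivAt_charP (z : ℂ) :
    HasDerivAt (charP a b₁ b₂ c τ)
      (4 * z ^ 3 + 3 * cA a b₁ b₂ * z ^ 2 + 2 * cB a b₁ b₂ * z + cC a b₁ b₂
        - cE c * ((2 * z + b₁ + b₂) - 2 * τ * (z + b₁) * (z + b₂)) * Complex.exp (-(2 * z * τ)))
      z := by
  have hexp : HasDerivAt (fun z : ℂ => Complex.exp (-(2 * z * τ)))
      (Complex.exp (-(2 * z * τ)) * (-(2 * τ))) z := by
    simpa using (((hasDerivAt_id z).const_mul (2 : ℂ)).mul_const (τ : ℂ)).neg.cexp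
  have hpoly := ((((hasDerivAt_pow 4 z).add ((hasDerivAt_pow 3 z).const_mul (cA a b₁ b₂ : ℂ))).add
    ((hasDerivAt_pow 2 z).const_mul (cB a b₁ b₂ : ℂ))).add
    ((hasDerivAt_id z).const_mul (cC a b₁ b₂ : ℂ))).add_const (cD a b₁ b₂ : ℂ)
  have hprod := ((((hasDerivAt_id z).add_const (b₁ : ℂ)).const_mul (cE c : ℂ)).mul
    ((hasDerivAt_id z).add_const (b₂ : ℂ))).mul hexp
  refine (hpoly.sub hprod).congr_deriv ?_
  simp only [id, Pi.mul_apply]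
  ring

theorem deriv_charP_zero : deriv (charP a b₁ b₂ c τ) 0
    = ((cC a b₁ b₂ - cE c * (b₁ + b₂) + 2 * cE c * τ * (b₁ * b₂) : ℝ) : ℂ) := by
  rw [(hasDerivAt_charP a b₁ b₂ c τ 0).deriv]
  simp only [mul_zero, zero_mul, neg_zero, Complex.exp_zero]
  push_cast
  ring

end

theorem stmt_13_general (a b₁ b₂ c τ : ℝ) (hb₁ : 0 < b₁) (hb₂ : 0 < b₂)
    (hc : c ≠ 0) :
    (charP a b₁ b₂ c τ 0 = 0 ∧ deriv (charP a b₁ b₂ c τ) 0 = 0) ↔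
      (c^2 * b₁ * b₂ = cD a b₁ b₂ ∧
        τ = (c^2 * (b₁+b₂) - cC a b₁ b₂) / (2 * c^2 * b₁ * b₂)) := by
  have hden : 2 * c^2 * b₁ * b₂ ≠ 0 := by positivity
  rw [charP_zero, deriv_charP_zero, Complex.ofReal_eq_zero, Complex.ofReal_eq_zero, cE,
    eq_div_iff hden]
  constructor <;> rintro ⟨h₀, h₁⟩ <;> constructor <;> linarith

theorem stmt_13 (a b₁ b₂ c τ : ℝ) (ha : 0 < a) (hb₁ : 0 < b₁) (hb₂ : 0 < b₂)
    (hc : c ≠ 0) (hτ : 0 ≤ τ) :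
    (charP a b₁ b₂ c τ 0 = 0 ∧ deriv (charP a b₁ b₂ c τ) 0 = 0) ↔
      (c^2 * b₁ * b₂ = cD a b₁ b₂ ∧
        τ = (c^2 * (b₁+b₂) - cC a b₁ b₂) / (2 * c^2 * b₁ * b₂)) :=
  stmt_13_general a b₁ b₂ c τ hb₁ hb₂ hc
end
end

section
/- Assume c ≠ 0 and let λ ∈ ℂ with λ ≠ −b₂. Define u₁ = λ + b₁, u₂ = 1, u₃ = e^{λτ}·((λ−a)(λ+b₁) + 1)/c, and u₄ = u₃/(λ+b₂). If P(λ) = 0, then (u₁,u₂,u₃,u₄) is a nonzero solution of the linearized eigenvalue equations of the delay-coupled FitzHugh–Nagumo system: λu₁ = a u₁ − u₂ + c e^{−λτ} u₃, λu₂ = u₁ − b₁u₂, λu₃ = a u₃ − u₄ + c e^{−λτ} u₁, and λu₄ = u₃ − b₂u₄. -/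
noncomputable section

/-
The vector is built so that the first, second and fourth eigenvalue equations hold identically
in `λ`. Writing `p_i(λ) = (λ - a)(λ + b_i) + 1`, the characteristic function factors as
`P(λ) = p₁(λ) p₂(λ) - c² (λ + b₁)(λ + b₂) e^{-2λτ}`, and the remaining third equation is exactly
`P(λ) = 0` multiplied by `e^{2λτ}`.
-/

open Complex

theorem charP_eq (a b₁ b₂ c τ : ℝ) (z : ℂ) :
    charP a b₁ b₂ c τ z =
      ((z - a) * (z + b₁) + 1) * ((z - a) * (z + b₂) + 1)
        - (c : ℂ) ^ 2 * (z + b₁) * (z + b₂) * exp (-(z * τ)) ^ 2 := by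
  rw [charP, ← exp_nat_mul]
  simp only [cA, cB, cC, cD, cE]
  push_cast
  ring_nf

theorem mul_exp_sq_eq_of_charP_eq_zero {a b₁ b₂ c τ : ℝ} {z : ℂ}
    (hroot : charP a b₁ b₂ c τ z = 0) :
    ((z - a) * (z + b₁) + 1) * ((z - a) * (z + b₂) + 1) * exp (z * τ) ^ 2 =
      (c : ℂ) ^ 2 * (z + b₁) * (z + b₂) := by
  have hinv : exp (-(z * τ)) * exp (z * τ) = 1 := by rw [← exp_add, neg_add_cancel, exp_zero]
  rw [charP_eq] at hroot
  linear_combination exp (z * τ) ^ 2 * hroot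
    + (c : ℂ) ^ 2 * (z + b₁) * (z + b₂) * (exp (-(z * τ)) * exp (z * τ) + 1) * hinv

theorem stmt_16_general (a b₁ b₂ c τ : ℝ)
    (hc : c ≠ 0) (z : ℂ) (hz : z ≠ -(b₂:ℂ))
    (u₁ u₂ u₃ u₄ : ℂ)
    (hu₁ : u₁ = z + (b₁:ℂ)) (hu₂ : u₂ = 1)
    (hu₃ : u₃ = Complex.exp (z * (τ:ℂ)) * ((z - (a:ℂ)) * (z + (b₁:ℂ)) + 1) / (c:ℂ))
    (hu₄ : u₄ = u₃ / (z + (b₂:ℂ)))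
    (hroot : charP a b₁ b₂ c τ z = 0) :
    (z * u₁ = (a:ℂ) * u₁ - u₂ + (c:ℂ) * Complex.exp (-(z * (τ:ℂ))) * u₃ ∧
      z * u₂ = u₁ - (b₁:ℂ) * u₂ ∧
      z * u₃ = (a:ℂ) * u₃ - u₄ + (c:ℂ) * Complex.exp (-(z * (τ:ℂ))) * u₁ ∧
      z * u₄ = u₃ - (b₂:ℂ) * u₄) ∧
    (u₁, u₂, u₃, u₄) ≠ (0, 0, 0, 0) := by
  have hc : (c : ℂ) ≠ 0 := ofReal_ne_zero.mpr hc
  have hz : z + b₂ ≠ 0 := fun h => hz (eq_neg_of_add_eq_zero_left h)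
  have key := mul_exp_sq_eq_of_charP_eq_zero hroot
  subst hu₁ hu₂ hu₃ hu₄
  rw [exp_neg]
  refine ⟨⟨?_, by ring, ?_, ?_⟩, fun h => one_ne_zero (congrArg (·.2.1) h)⟩
  · field_simp
    ring
  · field_simp
    linear_combination key
  · field_simp
    ring

theorem stmt_16 (a b₁ b₂ c τ : ℝ) (ha : 0 < a) (hb₁ : 0 < b₁) (hb₂ : 0 < b₂)
    (hc : c ≠ 0) (hτ : 0 ≤ τ) (z : ℂ) (hz : z ≠ -(b₂:ℂ))
    (u₁ u₂ u₃ u₄ : ℂ)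
    (hu₁ : u₁ = z + (b₁:ℂ)) (hu₂ : u₂ = 1)
    (hu₃ : u₃ = Complex.exp (z * (τ:ℂ)) * ((z - (a:ℂ)) * (z + (b₁:ℂ)) + 1) / (c:ℂ))
    (hu₄ : u₄ = u₃ / (z + (b₂:ℂ)))
    (hroot : charP a b₁ b₂ c τ z = 0) :
    (z * u₁ = (a:ℂ) * u₁ - u₂ + (c:ℂ) * Complex.exp (-(z * (τ:ℂ))) * u₃ ∧
      z * u₂ = u₁ - (b₁:ℂ) * u₂ ∧
      z * u₃ = (a:ℂ) * u₃ - u₄ + (c:ℂ) * Complex.exp (-(z * (τ:ℂ))) * u₁ ∧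
      z * u₄ = u₃ - (b₂:ℂ) * u₄) ∧
    (u₁, u₂, u₃, u₄) ≠ (0, 0, 0, 0) :=
  stmt_16_general a b₁ b₂ c τ hc z hz u₁ u₂ u₃ u₄ hu₁ hu₂ hu₃ hu₄ hroot
end
end
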